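/- Let X be a finite set, (b,o,c) a magnetic Schrödinger graph over (X,m), and assume Q(φ) ≥ 0 for all φ : X → ℂ. Assume the potential is form bounded with bounds M > 0 and C ≥ 0, i.e., ∑_{x∈X} c₋(x)|φ(x)|² ≤ M·Q(φ) + C·∑_{x∈X} m(x)|φ(x)|² for all φ, and let λ ∈ ℝ satisfy λ·∑_x m(x)|φ(x)|² ≤ Q(φ) for all φ. Let p ∈ [2(M+1)/M − 2√(M+1)/M, 2(M+1)/M + 2√(M+1)/M], set C_p = 4(p−1)/p² and D_p = (C_p − M(1−C_p))·λ − C·(1−C_p). If u : [0,∞) → (X → ℂ) is differentiable with (d/dt)u_t(x) = −ℋu_t(x) for all t > 0 and x ∈ X, then ‖u_t‖_p ≤ e^{−D_p·t}·‖u_0‖_p for all t ≥ 0, where ‖f‖_p^p = ∑_{x∈X} m(x)|f(x)|^p. -/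

import Mathlib

/-- The quadratic form of a magnetic Schrödinger graph on a finite set:
`Q(φ) = (1/2)∑_{x,y} b(x,y)|φ(x) − o(x,y)φ(y)|² + ∑_x c(x)|φ(x)|²`. -/
noncomputable def QFin {X : Type*} [Fintype X] (b : X → X → ℝ) (o : X → X → ℂ)
    (c : X → ℝ) (φ : X → ℂ) : ℝ :=
  1 / 2 * ∑ x, ∑ y, b x y * ‖φ x - o x y * φ y‖ ^ 2 +
    ∑ x, c x * ‖φ x‖ ^ 2


open MeasureTheory intervalIntegral Set Complex Filter Asymptotics

/-- 1-D Cauchy–Schwarz for interval integrals. -/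
lemma cs_aux (g G : ℝ → ℝ) (B A : ℝ) (hBA : B ≤ A)
    (hg : IntervalIntegrable g volume B A) (hG : IntervalIntegrable G volume B A)
    (hsq : ∀ s ∈ Set.uIcc B A, g s ^ 2 = G s) :
    (∫ s in B..A, g s) ^ 2 ≤ (A - B) * ∫ s in B..A, G s := by
  rcases eq_or_lt_of_le hBA with h | hlt
  · subst h; simp
  set L := A - B with hL
  have hL0 : 0 < L := by simp [hL]; linarith
  set cl := (∫ s in B..A, g s) / L with hcl
  set q : ℝ → ℝ := fun s => (g s - cl) ^ 2 with hq
  set Q : ℝ → ℝ := fun s => G s - 2 * cl * g s + cl ^ 2 with hQdef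
  have hqQ : ∀ s ∈ Set.uIcc B A, q s = Q s := by
    intro s hs
    simp only [hq, hQdef, ← hsq s hs]; ring
  have hQint : IntervalIntegrable Q volume B A := by
    exact (hG.sub (hg.const_mul (2 * cl))).add (intervalIntegrable_const)
  have hqint : IntervalIntegrable q volume B A := by
    rw [intervalIntegrable_iff_integrableOn_Ioc_of_le hBA]
    refine (((intervalIntegrable_iff_integrableOn_Ioc_of_le hBA).mp hQint).congr_fun ?_ measurableSet_Ioc)
    intro s hs
    exact (hqQ s (Set.mem_uIcc_of_le (le_of_lt hs.1) hs.2)).symm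
  have h0 : 0 ≤ ∫ s in B..A, q s := by
    apply intervalIntegral.integral_nonneg hBA
    intro s _; positivity
  have hEq : ∫ s in B..A, q s = ∫ s in B..A, Q s := intervalIntegral.integral_congr hqQ
  have hQval : ∫ s in B..A, Q s =
      (∫ s in B..A, G s) - 2 * cl * (∫ s in B..A, g s) + L * cl ^ 2 := by
    rw [hQdef]
    rw [intervalIntegral.integral_add (hG.sub (hg.const_mul (2 * cl))) intervalIntegrable_const,
      intervalIntegral.integral_sub hG (hg.const_mul (2 * cl)),
      intervalIntegral.integral_const_mul, intervalIntegral.integral_const, smul_eq_mul]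
    try ring
  rw [hEq, hQval, hcl] at h0
  have key : ∀ I J : ℝ, 0 ≤ J - 2 * (I / L) * I + L * (I / L) ^ 2 → I ^ 2 ≤ L * J := by
    intro I J h
    have h2 : L * (J - 2 * (I / L) * I + L * (I / L) ^ 2) = L * J - I ^ 2 := by
      field_simp; ring
    nlinarith [mul_nonneg hL0.le h]
  exact key _ _ h0

/-- `(x^c)^2 = x^(2c)` for `x ≥ 0`, rpow. -/
lemma rpow_sq' {x : ℝ} (hx : 0 ≤ x) (c : ℝ) : (x ^ c) ^ 2 = x ^ (c * 2) := by
  rw [← Real.rpow_natCast (x ^ c) 2, ← Real.rpow_mul hx]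
  norm_num

/-- key classical inequality, ordered case -/
lemma lemma1_le {p : ℝ} (hp : 1 < p) {A B : ℝ} (hB : 0 ≤ B) (hBA : B ≤ A) :
    4 * (p - 1) / p ^ 2 * (A ^ (p / 2) - B ^ (p / 2)) ^ 2 ≤
      (A - B) * (A ^ (p - 1) - B ^ (p - 1)) := by
  have hp0 : 0 < p := by linarith
  have hA : 0 ≤ A := le_trans hB hBA
  have hg : IntervalIntegrable (fun s : ℝ => s ^ (p / 2 - 1)) volume B A :=
    intervalIntegral.intervalIntegrable_rpow' (by linarith)
  have hG : IntervalIntegrable (fun s : ℝ => s ^ (p - 2)) volume B A :=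
    intervalIntegral.intervalIntegrable_rpow' (by linarith)
  have hsq : ∀ s ∈ Set.uIcc B A, (s ^ (p / 2 - 1)) ^ 2 = s ^ (p - 2) := by
    intro s hs
    have hs0 : 0 ≤ s := by
      rcases Set.mem_uIcc.mp hs with h | h
      · linarith [h.1]
      · linarith [h.1]
    rw [rpow_sq' hs0]; ring_nf
  have key := cs_aux _ _ B A hBA hg hG hsq
  have hI : (∫ s in B..A, s ^ (p / 2 - 1)) = (A ^ (p / 2) - B ^ (p / 2)) / (p / 2) := by
    rw [integral_rpow (Or.inl (by linarith))]; norm_num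
  have hJ : (∫ s in B..A, s ^ (p - 2)) = (A ^ (p - 1) - B ^ (p - 1)) / (p - 1) := by
    rw [integral_rpow (Or.inl (by linarith)), show p - 2 + 1 = p - 1 by ring]
  rw [hI, hJ] at key
  have hp1 : 0 < p - 1 := by linarith
  obtain ⟨F, hF⟩ : ∃ F, A ^ (p / 2) - B ^ (p / 2) = F := ⟨_, rfl⟩
  obtain ⟨E, hE⟩ : ∃ E, A ^ (p - 1) - B ^ (p - 1) = E := ⟨_, rfl⟩
  rw [hF, hE] at key ⊢
  rw [div_pow] at key
  rw [div_le_iff₀ (by positivity : (0:ℝ) < (p/2)^2)] at key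
  calc 4 * (p - 1) / p ^ 2 * F ^ 2 = F ^ 2 * (4 * (p - 1) / p ^ 2) := by ring
    _ ≤ (A - B) * (E / (p - 1)) * (p / 2) ^ 2 * (4 * (p - 1) / p ^ 2) :=
        mul_le_mul_of_nonneg_right key (by positivity)
    _ = (A - B) * E := by field_simp; ring

/-- rpow product: `x^y * x = x^(y+1)` for `x ≥ 0`, `y+1 ≠ 0`. -/
lemma rpow_mul_self {x : ℝ} (hx : 0 ≤ x) {y : ℝ} (hy : y + 1 ≠ 0) :
    x ^ y * x = x ^ (y + 1) := by
  rw [Real.rpow_add' hx hy, Real.rpow_one]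

lemma lemma1 {p : ℝ} (hp : 1 < p) {A B : ℝ} (hA : 0 ≤ A) (hB : 0 ≤ B) :
    4 * (p - 1) / p ^ 2 * (A ^ (p / 2) - B ^ (p / 2)) ^ 2 ≤
      (A - B) * (A ^ (p - 1) - B ^ (p - 1)) := by
  rcases le_total B A with h | h
  · exact lemma1_le hp hB h
  · have := lemma1_le hp hA h
    calc 4 * (p - 1) / p ^ 2 * (A ^ (p / 2) - B ^ (p / 2)) ^ 2
        = 4 * (p - 1) / p ^ 2 * (B ^ (p / 2) - A ^ (p / 2)) ^ 2 := by ring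
      _ ≤ (B - A) * (B ^ (p - 1) - A ^ (p - 1)) := this
      _ = (A - B) * (A ^ (p - 1) - B ^ (p - 1)) := by ring

lemma lemma2 {p : ℝ} (hp : 1 < p) (hCp : 4 * (p - 1) / p ^ 2 ≤ 1)
    {A B : ℝ} (hA : 0 ≤ A) (hB : 0 ≤ B) :
    4 * (p - 1) / p ^ 2 * (A ^ (p / 2) + B ^ (p / 2)) ^ 2 ≤
      (A + B) * (A ^ (p - 1) + B ^ (p - 1)) := by
  have hp0 : 0 < p := by linarith
  have hcross : 2 * (A ^ (p / 2) * B ^ (p / 2)) ≤ A ^ (p - 1) * B + A * B ^ (p - 1) := by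
    have hsq := sq_nonneg (A ^ ((p - 1) / 2) * B ^ (1 / 2 : ℝ) - A ^ (1 / 2 : ℝ) * B ^ ((p - 1) / 2))
    have e1 : (A ^ ((p - 1) / 2)) ^ 2 = A ^ (p - 1) := by
      rw [rpow_sq' hA]; ring_nf
    have e1' : (B ^ ((p - 1) / 2)) ^ 2 = B ^ (p - 1) := by
      rw [rpow_sq' hB]; ring_nf
    have e2 : (A ^ (1 / 2 : ℝ)) ^ 2 = A := by
      rw [rpow_sq' hA]; norm_num
    have e2' : (B ^ (1 / 2 : ℝ)) ^ 2 = B := by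
      rw [rpow_sq' hB]; norm_num
    have e3 : A ^ ((p - 1) / 2) * A ^ (1 / 2 : ℝ) = A ^ (p / 2) := by
      rw [← Real.rpow_add' hA (by ring_nf; positivity)]; ring_nf
    have e3' : B ^ ((p - 1) / 2) * B ^ (1 / 2 : ℝ) = B ^ (p / 2) := by
      rw [← Real.rpow_add' hB (by ring_nf; positivity)]; ring_nf
    have expand : (A ^ ((p - 1) / 2) * B ^ (1 / 2:ℝ) - A ^ (1 / 2:ℝ) * B ^ ((p - 1) / 2)) ^ 2
        = (A ^ ((p - 1) / 2)) ^ 2 * (B ^ (1 / 2:ℝ)) ^ 2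
          - 2 * ((A ^ ((p - 1) / 2) * A ^ (1 / 2:ℝ)) * (B ^ ((p - 1) / 2) * B ^ (1 / 2:ℝ)))
          + (A ^ (1 / 2:ℝ)) ^ 2 * (B ^ ((p - 1) / 2)) ^ 2 := by ring
    rw [expand, e1, e1', e2, e2', e3, e3'] at hsq
    linarith [hsq]
  have f1 : (A ^ (p / 2)) ^ 2 = A ^ p := by rw [rpow_sq' hA]; ring_nf
  have f1' : (B ^ (p / 2)) ^ 2 = B ^ p := by rw [rpow_sq' hB]; ring_nf
  have f2 : A ^ (p - 1) * A = A ^ p := by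
    rw [rpow_mul_self hA (by simpa using hp0.ne')]; ring_nf
  have f2' : B ^ (p - 1) * B = B ^ p := by
    rw [rpow_mul_self hB (by simpa using hp0.ne')]; ring_nf
  have hX : (0:ℝ) ≤ (A ^ (p / 2) + B ^ (p / 2)) ^ 2 := sq_nonneg _
  have step : 1 * (A ^ (p / 2) + B ^ (p / 2)) ^ 2 ≤ (A + B) * (A ^ (p - 1) + B ^ (p - 1)) := by
    nlinarith [hcross, f1, f1', f2, f2']
  calc 4 * (p - 1) / p ^ 2 * (A ^ (p / 2) + B ^ (p / 2)) ^ 2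
      ≤ 1 * (A ^ (p / 2) + B ^ (p / 2)) ^ 2 := mul_le_mul_of_nonneg_right hCp hX
    _ ≤ (A + B) * (A ^ (p - 1) + B ^ (p - 1)) := step

/-- Main pointwise real inequality. -/
lemma key_real {p : ℝ} (hp : 1 < p) (hCp : 4 * (p - 1) / p ^ 2 ≤ 1)
    {A B r : ℝ} (hA : 0 ≤ A) (hB : 0 ≤ B) (hr : |r| ≤ A * B) :
    4 * (p - 1) / p ^ 2 * (A ^ p + B ^ p - 2 * r * (A ^ (p / 2 - 1) * B ^ (p / 2 - 1))) ≤
      A ^ p + B ^ p - r * (A ^ (p - 2) + B ^ (p - 2)) := by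
  have hp0 : 0 < p := by linarith
  obtain ⟨Cp, hCpdef⟩ : ∃ Cp, 4 * (p - 1) / p ^ 2 = Cp := ⟨_, rfl⟩
  rw [hCpdef] at hCp ⊢
  have hCp0 : 0 ≤ Cp := by rw [← hCpdef]; exact div_nonneg (by linarith) (by positivity)
  have fA1 : A ^ (p - 2) * A = A ^ (p - 1) := by
    rw [rpow_mul_self hA (by intro h; exact hp0.ne' (by linarith))]; ring_nf
  have fB1 : B ^ (p - 2) * B = B ^ (p - 1) := by
    rw [rpow_mul_self hB (by intro h; exact hp0.ne' (by linarith))]; ring_nf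
  have fA2 : A ^ (p / 2 - 1) * A = A ^ (p / 2) := by
    rw [rpow_mul_self hA (by intro h; exact hp0.ne' (by linarith))]; ring_nf
  have fB2 : B ^ (p / 2 - 1) * B = B ^ (p / 2) := by
    rw [rpow_mul_self hB (by intro h; exact hp0.ne' (by linarith))]; ring_nf
  have fA3 : A ^ (p - 1) * A = A ^ p := by
    rw [rpow_mul_self hA (by simpa using hp0.ne')]; ring_nf
  have fB3 : B ^ (p - 1) * B = B ^ p := by
    rw [rpow_mul_self hB (by simpa using hp0.ne')]; ring_nf
  have f4A : (A ^ (p / 2)) ^ 2 = A ^ p := by rw [rpow_sq' hA]; ring_nf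
  have f4B : (B ^ (p / 2)) ^ 2 = B ^ p := by rw [rpow_sq' hB]; ring_nf
  have gA : A ^ (p - 2) * (A * B) = A ^ (p - 1) * B := by rw [← fA1]; ring
  have gB : B ^ (p - 2) * (A * B) = A * B ^ (p - 1) := by rw [← fB1]; ring
  have gAB : Cp * ((A ^ (p / 2 - 1) * B ^ (p / 2 - 1)) * (A * B))
      = Cp * (A ^ (p / 2) * B ^ (p / 2)) := by rw [← fA2, ← fB2]; ring
  set β := (A ^ (p - 2) + B ^ (p - 2)) - Cp * (2 * (A ^ (p / 2 - 1) * B ^ (p / 2 - 1))) with hβ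
  suffices hs : β * r ≤ (1 - Cp) * (A ^ p + B ^ p) by
    rw [hβ] at hs; linarith [hs]
  have l1 := lemma1 hp hA hB
  rw [hCpdef] at l1
  have l2 := lemma2 hp (hCpdef ▸ hCp) hA hB
  rw [hCpdef] at l2
  have E1 : β * (A * B) = A ^ (p - 1) * B + A * B ^ (p - 1)
      - 2 * (Cp * (A ^ (p / 2) * B ^ (p / 2))) := by
    rw [hβ]; linear_combination gA + gB - 2 * gAB
  have E2 : β * (-(A * B)) = -(A ^ (p - 1) * B) - A * B ^ (p - 1)
      + 2 * (Cp * (A ^ (p / 2) * B ^ (p / 2))) := by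
    rw [hβ]; linear_combination -gA - gB + 2 * gAB
  have cf4A : Cp * (A ^ (p / 2)) ^ 2 = Cp * A ^ p := by rw [f4A]
  have cf4B : Cp * (B ^ (p / 2)) ^ 2 = Cp * B ^ p := by rw [f4B]
  have h1 : β * (A * B) ≤ (1 - Cp) * (A ^ p + B ^ p) := by
    rw [E1]; linarith [l1, fA3, fB3, cf4A, cf4B]
  have h2 : β * (-(A * B)) ≤ (1 - Cp) * (A ^ p + B ^ p) := by
    rw [E2]; linarith [l2, fA3, fB3, cf4A, cf4B]
  rcases le_or_gt 0 β with hβ0 | hβ0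
  · calc β * r ≤ β * (A * B) := mul_le_mul_of_nonneg_left (le_trans (le_abs_self r) hr) hβ0
      _ ≤ (1 - Cp) * (A ^ p + B ^ p) := h1
  · have hge : -(A * B) ≤ r := by
      have h := abs_le.mp hr
      linarith [h.1]
    calc β * r ≤ β * (-(A * B)) := mul_le_mul_of_nonpos_left hge hβ0.le
      _ ≤ (1 - Cp) * (A ^ p + B ^ p) := h2

/-- `A^(p/2-1) * A^(p/2-1) = A^(p-2)` for `A ≥ 0`. -/
lemma rpow_half_sq {A : ℝ} (hA : 0 ≤ A) (p : ℝ) :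
    A ^ (p / 2 - 1) * A ^ (p / 2 - 1) = A ^ (p - 2) := by
  have : A ^ (p / 2 - 1) * A ^ (p / 2 - 1) = (A ^ (p / 2 - 1)) ^ 2 := by ring
  rw [this, rpow_sq' hA]
  ring_nf

/-- `A^2 * A^(p-2) = A^p` for `A ≥ 0`, `1 < p` (`A^2` is nat pow). -/
lemma sq_mul_rpow {A : ℝ} (hA : 0 ≤ A) {p : ℝ} (hp : 1 < p) :
    A ^ (2:ℕ) * A ^ (p - 2) = A ^ p := by
  rcases eq_or_lt_of_le hA with h0 | h0
  · rw [← h0]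
    rw [Real.zero_rpow (by linarith : p ≠ 0)]
    norm_num
  · rw [← Real.rpow_natCast A 2, ← Real.rpow_add h0]
    norm_num

/-- pointwise complex key inequality -/
lemma key_pair {p : ℝ} (hp : 1 < p) (hCp : 4 * (p - 1) / p ^ 2 ≤ 1)
    (z w ov : ℂ) (ho : ‖ov‖ = 1) :
    4 * (p - 1) / p ^ 2 *
        ‖z * ((‖z‖ ^ (p / 2 - 1) : ℝ) : ℂ)
          - ov * (w * ((‖w‖ ^ (p / 2 - 1) : ℝ) : ℂ))‖ ^ 2 ≤
      ‖z‖ ^ (p - 2) * ((starRingEnd ℂ) z * (z - ov * w)).re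
        + ‖w‖ ^ (p - 2) * ((starRingEnd ℂ) w * (w - (starRingEnd ℂ) ov * z)).re := by
  set A := ‖z‖ with hA
  set B := ‖w‖ with hB
  have hA0 : 0 ≤ A := norm_nonneg z
  have hB0 : 0 ≤ B := norm_nonneg w
  set r := (ov * w * (starRingEnd ℂ) z).re with hr
  have hr_abs : |r| ≤ A * B := by
    calc |r| ≤ ‖ov * w * (starRingEnd ℂ) z‖ := Complex.abs_re_le_norm _
      _ = A * B := by
          rw [norm_mul, norm_mul, Complex.norm_conj, ho]; ring
  have h1 : ((starRingEnd ℂ) z * (z - ov * w)).re = A ^ (2:ℕ) - r := by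
    have e : (starRingEnd ℂ) z * (z - ov * w)
        = ((Complex.normSq z : ℝ) : ℂ) - ov * w * (starRingEnd ℂ) z := by
      rw [Complex.normSq_eq_conj_mul_self]; ring
    rw [e, Complex.sub_re, Complex.ofReal_re, ← hr, Complex.sq_norm]
  have h2 : ((starRingEnd ℂ) w * (w - (starRingEnd ℂ) ov * z)).re = B ^ (2:ℕ) - r := by
    have e : (starRingEnd ℂ) w * (w - (starRingEnd ℂ) ov * z)
        = ((Complex.normSq w : ℝ) : ℂ) - (starRingEnd ℂ) (ov * w * (starRingEnd ℂ) z) := by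
      rw [Complex.normSq_eq_conj_mul_self]
      simp only [map_mul, Complex.conj_conj]
      ring
    rw [e, Complex.sub_re, Complex.ofReal_re, Complex.conj_re, ← hr, Complex.sq_norm]
  have h3 : ‖z * ((A ^ (p / 2 - 1) : ℝ) : ℂ)
      - ov * (w * ((B ^ (p / 2 - 1) : ℝ) : ℂ))‖ ^ 2
      = A ^ p + B ^ p - 2 * r * (A ^ (p / 2 - 1) * B ^ (p / 2 - 1)) := by
    rw [Complex.sq_norm, Complex.normSq_sub]
    have e1 : Complex.normSq (z * ((A ^ (p / 2 - 1) : ℝ) : ℂ)) = A ^ p := by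
      rw [Complex.normSq_mul, Complex.normSq_ofReal, ← Complex.sq_norm z, ← hA,
        rpow_half_sq hA0, sq_mul_rpow hA0 hp]
    have e2 : Complex.normSq (ov * (w * ((B ^ (p / 2 - 1) : ℝ) : ℂ))) = B ^ p := by
      rw [Complex.normSq_mul, Complex.normSq_mul, Complex.normSq_ofReal,
        ← Complex.sq_norm ov, ← Complex.sq_norm w, ho, ← hB, rpow_half_sq hB0,
        sq_mul_rpow hB0 hp]
      norm_num
    have e3 : ((z * ((A ^ (p / 2 - 1) : ℝ) : ℂ)) *
        (starRingEnd ℂ) (ov * (w * ((B ^ (p / 2 - 1) : ℝ) : ℂ)))).re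
        = r * (A ^ (p / 2 - 1) * B ^ (p / 2 - 1)) := by
      have e : (z * ((A ^ (p / 2 - 1) : ℝ) : ℂ)) *
          (starRingEnd ℂ) (ov * (w * ((B ^ (p / 2 - 1) : ℝ) : ℂ)))
          = (starRingEnd ℂ) (ov * w * (starRingEnd ℂ) z) *
              (((A ^ (p / 2 - 1) * B ^ (p / 2 - 1) : ℝ)) : ℂ) := by
        simp only [map_mul, Complex.conj_conj, Complex.conj_ofReal, Complex.ofReal_mul]
        ring
      rw [e, Complex.mul_re, Complex.conj_re, Complex.conj_im, Complex.ofReal_re,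
        Complex.ofReal_im, ← hr]
      ring
    rw [e1, e2, e3]
    ring
  rw [h1, h2, h3]
  have key := key_real hp hCp hA0 hB0 hr_abs
  have eA : A ^ (p - 2) * (A ^ (2:ℕ) - r) = A ^ p - r * A ^ (p - 2) := by
    have : A ^ (p - 2) * A ^ (2:ℕ) = A ^ p := by rw [mul_comm, sq_mul_rpow hA0 hp]
    nlinarith [this]
  have eB : B ^ (p - 2) * (B ^ (2:ℕ) - r) = B ^ p - r * B ^ (p - 2) := by
    have : B ^ (p - 2) * B ^ (2:ℕ) = B ^ p := by rw [mul_comm, sq_mul_rpow hB0 hp]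
    nlinarith [this]
  rw [eA, eB]
  linarith [key]

/-- Derivative of `t ↦ |f t|^p` for `p > 1`. -/
lemma hasDerivAt_cabs_rpow {p : ℝ} (hp : 1 < p) {f : ℝ → ℂ} {d : ℂ} {t : ℝ}
    (hf : HasDerivAt f d t) :
    HasDerivAt (fun s => ‖f s‖ ^ p)
      (p * ‖f t‖ ^ (p - 2) * ((starRingEnd ℂ) (f t) * d).re) t := by
  have hp0 : 0 < p := by linarith
  rcases eq_or_ne (f t) 0 with hft | hft
  · -- zero case : derivative is 0
    have hval : p * ‖f t‖ ^ (p - 2) * ((starRingEnd ℂ) (f t) * d).re = 0 := by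
      rw [hft]; simp
    rw [hval]
    rw [hasDerivAt_iff_tendsto]
    obtain ⟨C0, hC0pos, hC0⟩ := hf.isBigO_sub.exists_pos
    rw [IsBigOWith] at hC0
    apply squeeze_zero' (g := fun s => C0 ^ p * |s - t| ^ (p - 1))
    · filter_upwards with s
      positivity
    · filter_upwards [hC0] with s hs
      rcases eq_or_ne s t with rfl | hst
      · simp only [sub_self, norm_zero, inv_zero, zero_mul]
        positivity
      · have hst0 : 0 < |s - t| := by
          rw [abs_pos]; exact sub_ne_zero.mpr hst
        have h1 : ‖‖f s‖ ^ p - ‖f t‖ ^ p - (s - t) • (0:ℝ)‖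
            = ‖f s‖ ^ p := by
          rw [hft]
          simp only [map_zero, norm_zero, smul_zero, sub_zero]
          rw [Real.zero_rpow hp0.ne', sub_zero, Real.norm_of_nonneg (Real.rpow_nonneg (norm_nonneg _) _)]
        rw [h1]
        have h2 : ‖f s‖ ≤ C0 * |s - t| := by
          have := hs
          simp only [hft, sub_zero] at this
          simpa [Real.norm_eq_abs] using this
        have h3 : ‖f s‖ ^ p ≤ (C0 * |s - t|) ^ p :=
          Real.rpow_le_rpow (norm_nonneg _) h2 hp0.le
        have h4 : (C0 * |s - t|) ^ p = C0 ^ p * |s - t| ^ p :=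
          Real.mul_rpow hC0pos.le (abs_nonneg _)
        have h5 : ‖s - t‖⁻¹ * (‖f s‖ ^ p) ≤ |s - t|⁻¹ * (C0 ^ p * |s - t| ^ p) := by
          rw [Real.norm_eq_abs]
          exact mul_le_mul_of_nonneg_left (h4 ▸ h3) (by positivity)
        refine le_trans h5 ?_
        have h6 : |s - t|⁻¹ * (C0 ^ p * |s - t| ^ p) = C0 ^ p * |s - t| ^ (p - 1) := by
          rw [Real.rpow_sub hst0, Real.rpow_one]
          field_simp
        rw [h6]
    · have hcont : Filter.Tendsto (fun s => |s - t|) (nhds t) (nhds 0) := by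
        have : Filter.Tendsto (fun s : ℝ => s - t) (nhds t) (nhds (t - t)) :=
          (continuous_id.sub continuous_const).tendsto t
        rw [sub_self] at this
        simpa using this.abs
      have hrpow : Filter.Tendsto (fun y : ℝ => y ^ (p - 1)) (nhds 0) (nhds 0) := by
        have h := (Real.continuousAt_rpow_const 0 (p - 1) (Or.inr (by linarith))).tendsto
        simpa [Real.zero_rpow (by linarith : p - 1 ≠ 0)] using h
      have := (hrpow.comp hcont).const_mul (C0 ^ p)
      simpa using this
  · -- nonzero case
    have habs : 0 < ‖f t‖ := norm_pos_iff.mpr hft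
    have hnormSq : 0 < Complex.normSq (f t) := Complex.normSq_pos.mpr hft
    -- derivative of s ↦ normSq (f s)
    have hre : HasDerivAt (fun s => (f s).re) d.re t :=
      (Complex.reCLM.hasFDerivAt.comp_hasDerivAt t hf)
    have him : HasDerivAt (fun s => (f s).im) d.im t :=
      (Complex.imCLM.hasFDerivAt.comp_hasDerivAt t hf)
    have hG : HasDerivAt (fun s => Complex.normSq (f s))
        (2 * ((starRingEnd ℂ) (f t) * d).re) t := by
      have h := (hre.mul hre).add (him.mul him)
      have e : (fun s => Complex.normSq (f s)) = fun s => (f s).re * (f s).re + (f s).im * (f s).im := by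
        funext s; rw [Complex.normSq_apply]
      rw [e]
      refine h.congr_deriv ?_
      simp [Complex.mul_re, Complex.conj_re, Complex.conj_im]
      ring
    have hpow : HasDerivAt (fun y : ℝ => y ^ (p / 2))
        ((p / 2) * (Complex.normSq (f t)) ^ (p / 2 - 1)) (Complex.normSq (f t)) :=
      Real.hasDerivAt_rpow_const (Or.inl hnormSq.ne')
    have hcomp := hpow.comp t hG
    have efun : (fun s => ‖f s‖ ^ p) = (fun s => Complex.normSq (f s) ^ (p / 2)) := by
      funext s
      rw [← Complex.sq_norm, ← Real.rpow_natCast (‖f s‖) 2,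
        ← Real.rpow_mul (norm_nonneg _)]
      congr 1
      push_cast
      ring
    rw [efun]
    refine hcomp.congr_deriv ?_
    have e2 : Complex.normSq (f t) ^ (p / 2 - 1) = ‖f t‖ ^ (p - 2) := by
      rw [← Complex.sq_norm, ← Real.rpow_natCast (‖f t‖) 2,
        ← Real.rpow_mul (norm_nonneg _)]
      congr 1
      push_cast
      ring
    rw [e2]
    ring

lemma deriv_bound {X : Type*} [Fintype X]
    (m : X → ℝ) (hm : ∀ x, 0 < m x)
    (b : X → X → ℝ) (hb0 : ∀ x y, 0 ≤ b x y) (hbsymm : ∀ x y, b x y = b y x)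
    (o : X → X → ℂ) (ho1 : ∀ x y, ‖o x y‖ = 1)
    (hosymm : ∀ x y, o x y = starRingEnd ℂ (o y x))
    (c : X → ℝ)
    (M : ℝ) (hM : 0 < M) (C : ℝ) (hC : 0 ≤ C)
    (hfb : ∀ φ : X → ℂ,
      (∑ x, max (-c x) 0 * ‖φ x‖ ^ 2) ≤
        M * QFin b o c φ + C * ∑ x, m x * ‖φ x‖ ^ 2)
    (lam : ℝ) (hlam : ∀ φ : X → ℂ, lam * (∑ x, m x * ‖φ x‖ ^ 2) ≤ QFin b o c φ)
    (p : ℝ) (hpgt1 : 1 < p) (hCple : 4 * (p - 1) / p ^ 2 ≤ 1)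
    (hK : 0 ≤ 4 * (p - 1) / p ^ 2 - M * (1 - 4 * (p - 1) / p ^ 2))
    (v : X → ℂ) :
    ∑ x, m x * (p * ‖v x‖ ^ (p - 2) *
        ((starRingEnd ℂ) (v x) *
          (-(((m x : ℝ) : ℂ)⁻¹ * (∑ y, ((b x y : ℝ) : ℂ) * (v x - o x y * v y)) +
            ((c x / m x : ℝ) : ℂ) * v x))).re) ≤
      -(p * ((4 * (p - 1) / p ^ 2 - M * (1 - 4 * (p - 1) / p ^ 2)) * lam
          - C * (1 - 4 * (p - 1) / p ^ 2))) *
        ∑ x, m x * ‖v x‖ ^ p := by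
  classical
  have hp0 : 0 < p := by linarith
  have hCp0 : 0 ≤ 4 * (p - 1) / p ^ 2 := div_nonneg (by linarith) (by positivity)
  set Cp := 4 * (p - 1) / p ^ 2 with hCpdef
  set φ : X → ℂ := fun x => v x * ((‖v x‖ ^ (p / 2 - 1) : ℝ) : ℂ) with hφ
  set S : X → ℂ := fun x => ∑ y, ((b x y : ℝ) : ℂ) * (v x - o x y * v y) with hSdef
  -- |φ x|² = |v x|^p
  have habsφ : ∀ x, ‖φ x‖ ^ (2:ℕ) = ‖v x‖ ^ p := by
    intro x
    rw [hφ]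
    simp only
    rw [norm_mul, Complex.norm_real, Real.norm_eq_abs,
      _root_.abs_of_nonneg (Real.rpow_nonneg (norm_nonneg (v x)) _), mul_pow]
    have : (‖v x‖ ^ (p / 2 - 1)) ^ (2:ℕ)
        = ‖v x‖ ^ (p / 2 - 1) * ‖v x‖ ^ (p / 2 - 1) := sq _
    rw [this, rpow_half_sq (norm_nonneg (v x)) p,
      sq_mul_rpow (norm_nonneg (v x)) hpgt1]
  -- step 0: rewrite each term of the sum
  have step0 : ∀ x, m x * (p * ‖v x‖ ^ (p - 2) *
      ((starRingEnd ℂ) (v x) *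
        (-(((m x : ℝ) : ℂ)⁻¹ * S x + ((c x / m x : ℝ) : ℂ) * v x))).re)
      = -p * (‖v x‖ ^ (p - 2) * ((starRingEnd ℂ) (v x) * S x).re
          + c x * ‖v x‖ ^ p) := by
    intro x
    have hre : ((starRingEnd ℂ) (v x) *
        (-(((m x : ℝ) : ℂ)⁻¹ * S x + ((c x / m x : ℝ) : ℂ) * v x))).re
        = -((m x)⁻¹ * ((starRingEnd ℂ) (v x) * S x).re
            + (c x / m x) * ‖v x‖ ^ (2:ℕ)) := by
      have e : (starRingEnd ℂ) (v x) *
          (-(((m x : ℝ) : ℂ)⁻¹ * S x + ((c x / m x : ℝ) : ℂ) * v x))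
          = -((((m x)⁻¹ : ℝ) : ℂ) * ((starRingEnd ℂ) (v x) * S x)
              + ((c x / m x : ℝ) : ℂ) * ((Complex.normSq (v x) : ℝ) : ℂ)) := by
        rw [Complex.normSq_eq_conj_mul_self, Complex.ofReal_inv]
        ring
      rw [e, Complex.neg_re, Complex.add_re, Complex.re_ofReal_mul, Complex.re_ofReal_mul,
        Complex.ofReal_re, ← Complex.sq_norm]
    rw [hre]
    have h1 : m x * (m x)⁻¹ = 1 := mul_inv_cancel₀ (hm x).ne'
    have h2 : m x * (c x / m x) = c x := by rw [mul_comm, div_mul_cancel₀ _ (hm x).ne']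
    have h3 : ‖v x‖ ^ (p - 2) * ‖v x‖ ^ (2:ℕ)
        = ‖v x‖ ^ p := by
      rw [mul_comm]; exact sq_mul_rpow (norm_nonneg _) hpgt1
    calc m x * (p * ‖v x‖ ^ (p - 2) *
        (-((m x)⁻¹ * ((starRingEnd ℂ) (v x) * S x).re
            + (c x / m x) * ‖v x‖ ^ (2:ℕ))))
        = -p * ((m x * (m x)⁻¹) *
              (‖v x‖ ^ (p - 2) * ((starRingEnd ℂ) (v x) * S x).re)
            + (m x * (c x / m x)) *
              (‖v x‖ ^ (p - 2) * ‖v x‖ ^ (2:ℕ))) := by ring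
      _ = -p * (‖v x‖ ^ (p - 2) * ((starRingEnd ℂ) (v x) * S x).re
            + c x * ‖v x‖ ^ p) := by rw [h1, h2, h3, one_mul]
  have hVeq : (∑ x, m x * (p * ‖v x‖ ^ (p - 2) *
      ((starRingEnd ℂ) (v x) *
        (-(((m x : ℝ) : ℂ)⁻¹ * S x + ((c x / m x : ℝ) : ℂ) * v x))).re))
      = -p * ((∑ x, ‖v x‖ ^ (p - 2) * ((starRingEnd ℂ) (v x) * S x).re)
          + ∑ x, c x * ‖v x‖ ^ p) := by
    rw [Finset.sum_congr rfl fun x _ => step0 x, ← Finset.mul_sum, Finset.sum_add_distrib]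
  rw [hVeq]
  -- expand AA as a double sum
  have hAAexp : (∑ x, ‖v x‖ ^ (p - 2) * ((starRingEnd ℂ) (v x) * S x).re)
      = ∑ x, ∑ y, b x y * (‖v x‖ ^ (p - 2) *
          ((starRingEnd ℂ) (v x) * (v x - o x y * v y)).re) := by
    apply Finset.sum_congr rfl
    intro x _
    have e : (starRingEnd ℂ) (v x) * S x
        = ∑ y, ((b x y : ℝ) : ℂ) * ((starRingEnd ℂ) (v x) * (v x - o x y * v y)) := by
      rw [hSdef]
      simp only
      rw [Finset.mul_sum]
      exact Finset.sum_congr rfl fun y _ => by ring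
    rw [e, Complex.re_sum, Finset.mul_sum]
    exact Finset.sum_congr rfl fun y _ => by rw [Complex.re_ofReal_mul]; ring
  -- swapped version
  have hswap : (∑ x, ∑ y, b x y * (‖v x‖ ^ (p - 2) *
          ((starRingEnd ℂ) (v x) * (v x - o x y * v y)).re))
      = ∑ x, ∑ y, b x y * (‖v y‖ ^ (p - 2) *
          ((starRingEnd ℂ) (v y) * (v y - (starRingEnd ℂ) (o x y) * v x)).re) := by
    rw [Finset.sum_comm]
    apply Finset.sum_congr rfl
    intro x _
    apply Finset.sum_congr rfl
    intro y _
    rw [hbsymm y x, hosymm y x]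
  -- pointwise key inequality, summed
  have hkey : Cp * (∑ x, ∑ y, b x y * ‖φ x - o x y * φ y‖ ^ (2:ℕ))
      ≤ 2 * (∑ x, ‖v x‖ ^ (p - 2) * ((starRingEnd ℂ) (v x) * S x).re) := by
    rw [hAAexp, two_mul]
    nth_rewrite 2 [hswap]
    rw [← Finset.sum_add_distrib, Finset.mul_sum]
    apply Finset.sum_le_sum
    intro x _
    rw [← Finset.sum_add_distrib, Finset.mul_sum]
    apply Finset.sum_le_sum
    intro y _
    have hk := key_pair hpgt1 hCple (v x) (v y) (o x y) (ho1 x y)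
    rw [← hCpdef] at hk
    have := mul_le_mul_of_nonneg_left hk (hb0 x y)
    calc Cp * (b x y * ‖φ x - o x y * φ y‖ ^ (2:ℕ))
        = b x y * (Cp * ‖φ x - o x y * φ y‖ ^ (2:ℕ)) := by ring
      _ ≤ b x y * (‖v x‖ ^ (p - 2) *
              ((starRingEnd ℂ) (v x) * (v x - o x y * v y)).re
            + ‖v y‖ ^ (p - 2) *
              ((starRingEnd ℂ) (v y) * (v y - (starRingEnd ℂ) (o x y) * v x)).re) := this
      _ = b x y * (‖v x‖ ^ (p - 2) *
              ((starRingEnd ℂ) (v x) * (v x - o x y * v y)).re)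
          + b x y * (‖v y‖ ^ (p - 2) *
              ((starRingEnd ℂ) (v y) * (v y - (starRingEnd ℂ) (o x y) * v x)).re) := by ring
  -- QFin of φ
  have hQφ : QFin b o c φ
      = 1 / 2 * (∑ x, ∑ y, b x y * ‖φ x - o x y * φ y‖ ^ (2:ℕ))
        + ∑ x, c x * ‖v x‖ ^ p := by
    rw [QFin]
    congr 1
    exact Finset.sum_congr rfl fun x _ => by rw [habsφ x]
  -- form boundedness applied to φ
  have hfbφ : (∑ x, max (-c x) 0 * ‖v x‖ ^ p)
      ≤ M * QFin b o c φ + C * ∑ x, m x * ‖v x‖ ^ p := by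
    have h := hfb φ
    have e1 : (∑ x, max (-c x) 0 * ‖φ x‖ ^ 2)
        = ∑ x, max (-c x) 0 * ‖v x‖ ^ p :=
      Finset.sum_congr rfl fun x _ => by rw [habsφ x]
    have e2 : (∑ x, m x * ‖φ x‖ ^ 2)
        = ∑ x, m x * ‖v x‖ ^ p :=
      Finset.sum_congr rfl fun x _ => by rw [habsφ x]
    rw [e1, e2] at h
    exact h
  have hlamφ : lam * (∑ x, m x * ‖v x‖ ^ p) ≤ QFin b o c φ := by
    have h := hlam φ
    have e2 : (∑ x, m x * ‖φ x‖ ^ 2)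
        = ∑ x, m x * ‖v x‖ ^ p :=
      Finset.sum_congr rfl fun x _ => by rw [habsφ x]
    rw [e2] at h
    exact h
  -- put everything together
  set Nv := ∑ x, m x * ‖v x‖ ^ p with hNv
  set CC := ∑ x, c x * ‖v x‖ ^ p with hCCv
  set AA := ∑ x, ‖v x‖ ^ (p - 2) * ((starRingEnd ℂ) (v x) * S x).re with hAAv
  have hCClb : -(∑ x, max (-c x) 0 * ‖v x‖ ^ p) ≤ CC := by
    rw [hCCv, ← Finset.sum_neg_distrib]
    apply Finset.sum_le_sum
    intro x _
    have h1 : -max (-c x) 0 ≤ c x := by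
      rcases le_total (-c x) 0 with h | h
      · rw [max_eq_right h]; linarith
      · rw [max_eq_left h]; linarith
    have h2 : 0 ≤ ‖v x‖ ^ p := Real.rpow_nonneg (norm_nonneg _) _
    nlinarith [h1, h2]
  have hAAlb : Cp * (QFin b o c φ - CC) ≤ AA := by
    have e : 2 * (QFin b o c φ - CC)
        = ∑ x, ∑ y, b x y * ‖φ x - o x y * φ y‖ ^ (2:ℕ) := by
      rw [hQφ, hCCv]; ring
    rw [← e] at hkey
    ring_nf at hkey ⊢
    linarith [hkey]
  have hQφ0 : Cp * QFin b o c φ + (1 - Cp) * CC ≤ AA + CC := by nlinarith [hAAlb]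
  have hQlb : ((Cp - M * (1 - Cp)) * lam - C * (1 - Cp)) * Nv
      ≤ Cp * QFin b o c φ + (1 - Cp) * CC := by
    have h1Cp : 0 ≤ 1 - Cp := by linarith
    have hb1 : (1 - Cp) * (-(M * QFin b o c φ + C * Nv)) ≤ (1 - Cp) * CC := by
      apply mul_le_mul_of_nonneg_left _ h1Cp
      calc -(M * QFin b o c φ + C * Nv)
          ≤ -(∑ x, max (-c x) 0 * ‖v x‖ ^ p) := by linarith [hfbφ]
        _ ≤ CC := hCClb
    have hb2 : (Cp - M * (1 - Cp)) * (lam * Nv) ≤ (Cp - M * (1 - Cp)) * QFin b o c φ :=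
      mul_le_mul_of_nonneg_left hlamφ hK
    nlinarith [hb1, hb2]
  have mono : ∀ {Y Z : ℝ}, Y ≤ Z → -p * Z ≤ -p * Y := by
    intro Y Z h
    have := mul_le_mul_of_nonneg_left h hp0.le
    linarith
  calc -p * (AA + CC) ≤ -p * (Cp * QFin b o c φ + (1 - Cp) * CC) := mono hQφ0
    _ ≤ -p * (((Cp - M * (1 - Cp)) * lam - C * (1 - Cp)) * Nv) := mono hQlb
    _ = -(p * ((Cp - M * (1 - Cp)) * lam - C * (1 - Cp))) * Nv := by ring

/-- **form bounded potential, finite version.** Assume `Q ≥ 0`, the potential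
is form bounded with bounds `M > 0`, `C ≥ 0`, and `λ` is a lower bound for the form. For
`p ∈ [2(M+1)/M − 2√(M+1)/M, 2(M+1)/M + 2√(M+1)/M]`, every solution of the heat equation
satisfies `‖u_t‖_p ≤ e^{−D_p t}‖u_0‖_p` with `C_p = 4(p−1)/p²` and
`D_p = (C_p − M(1−C_p))λ − C(1−C_p)`. -/
theorem stmt6 {X : Type*} [Fintype X]
    (m : X → ℝ) (hm : ∀ x, 0 < m x)
    (b : X → X → ℝ) (hb0 : ∀ x y, 0 ≤ b x y) (hbsymm : ∀ x y, b x y = b y x)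
    (hbdiag : ∀ x, b x x = 0)
    (o : X → X → ℂ) (ho1 : ∀ x y, ‖o x y‖ = 1)
    (hosymm : ∀ x y, o x y = starRingEnd ℂ (o y x))
    (c : X → ℝ)
    (hQpos : ∀ φ : X → ℂ, 0 ≤ QFin b o c φ)
    (M : ℝ) (hM : 0 < M) (C : ℝ) (hC : 0 ≤ C)
    (hfb : ∀ φ : X → ℂ,
      (∑ x, max (-c x) 0 * ‖φ x‖ ^ 2) ≤
        M * QFin b o c φ + C * ∑ x, m x * ‖φ x‖ ^ 2)
    (lam : ℝ) (hlam : ∀ φ : X → ℂ, lam * (∑ x, m x * ‖φ x‖ ^ 2) ≤ QFin b o c φ)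
    (p : ℝ) (hp1 : 2 * (M + 1) / M - 2 * Real.sqrt (M + 1) / M ≤ p)
    (hp2 : p ≤ 2 * (M + 1) / M + 2 * Real.sqrt (M + 1) / M)
    (u : ℝ → X → ℂ)
    (hucont : ∀ x, ContinuousOn (fun t => u t x) (Set.Ici (0 : ℝ)))
    (huderiv : ∀ t : ℝ, 0 < t → ∀ x, HasDerivAt (fun t' => u t' x)
      (-(((m x : ℝ) : ℂ)⁻¹ * (∑ y, ((b x y : ℝ) : ℂ) * (u t x - o x y * u t y)) +
          ((c x / m x : ℝ) : ℂ) * u t x)) t)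
    (t : ℝ) (ht : 0 ≤ t) :
    (∑ x, m x * ‖u t x‖ ^ p) ^ (1 / p) ≤
      Real.exp (-((4 * (p - 1) / p ^ 2 - M * (1 - 4 * (p - 1) / p ^ 2)) * lam -
          C * (1 - 4 * (p - 1) / p ^ 2)) * t) *
        (∑ x, m x * ‖u 0 x‖ ^ p) ^ (1 / p) := by
  classical
  -- basic facts about p
  have hM1 : (0:ℝ) < M + 1 := by linarith
  have hsq : Real.sqrt (M + 1) ^ 2 = M + 1 := Real.sq_sqrt hM1.le
  have hs0 : 0 < Real.sqrt (M + 1) := Real.sqrt_pos.mpr hM1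
  have hs1 : 1 < Real.sqrt (M + 1) := by nlinarith [hsq, hs0]
  have e1 : 2 * (M + 1) - 2 * Real.sqrt (M + 1) ≤ M * p := by
    have h := mul_le_mul_of_nonneg_left hp1 hM.le
    have e : M * (2 * (M + 1) / M - 2 * Real.sqrt (M + 1) / M)
        = 2 * (M + 1) - 2 * Real.sqrt (M + 1) := by field_simp
    linarith [e ▸ h]
  have e2 : M * p ≤ 2 * (M + 1) + 2 * Real.sqrt (M + 1) := by
    have h := mul_le_mul_of_nonneg_left hp2 hM.le
    have e : M * (2 * (M + 1) / M + 2 * Real.sqrt (M + 1) / M)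
        = 2 * (M + 1) + 2 * Real.sqrt (M + 1) := by field_simp
    linarith [e ▸ h]
  have hp0 : 0 < p := by nlinarith [e1, hsq, hs1, hM]
  have hquad : M * p ^ 2 - 4 * (M + 1) * p + 4 * (M + 1) ≤ 0 := by
    nlinarith [mul_nonneg (sub_nonneg.mpr e1) (sub_nonneg.mpr e2), hsq, hM, hp0]
  have hpgt1 : 1 < p := by nlinarith [hquad, hM, hp0, mul_pos hM (mul_pos hp0 hp0)]
  have hp2pos : (0:ℝ) < p ^ 2 := by positivity
  have hCple : 4 * (p - 1) / p ^ 2 ≤ 1 := by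
    rw [div_le_one hp2pos]; nlinarith [sq_nonneg (p - 2)]
  have hCp0 : 0 ≤ 4 * (p - 1) / p ^ 2 := div_nonneg (by linarith) hp2pos.le
  have hK : 0 ≤ 4 * (p - 1) / p ^ 2 - M * (1 - 4 * (p - 1) / p ^ 2) := by
    have e : 4 * (p - 1) / p ^ 2 - M * (1 - 4 * (p - 1) / p ^ 2)
        = ((1 + M) * (4 * (p - 1)) - M * p ^ 2) / p ^ 2 := by field_simp; ring
    rw [e]
    apply div_nonneg _ hp2pos.le
    nlinarith [hquad]
  obtain ⟨D, hD⟩ : ∃ D', (4 * (p - 1) / p ^ 2 - M * (1 - 4 * (p - 1) / p ^ 2)) * lam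
      - C * (1 - 4 * (p - 1) / p ^ 2) = D' := ⟨_, rfl⟩
  rw [hD]
  set N : ℝ → ℝ := fun s => ∑ x, m x * ‖u s x‖ ^ p with hNdef
  have hN0 : ∀ s, 0 ≤ N s := fun s =>
    Finset.sum_nonneg fun x _ =>
      mul_nonneg (hm x).le (Real.rpow_nonneg (norm_nonneg _) _)
  -- the derivative bound
  have hNderiv : ∀ s, 0 < s → ∃ V, HasDerivAt N V s ∧ V ≤ -(p * D) * N s := by
    intro s hs
    refine ⟨_, HasDerivAt.fun_sum fun x _ =>
      (hasDerivAt_cabs_rpow hpgt1 (huderiv s hs x)).const_mul (m x), ?_⟩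
    have hb := deriv_bound m hm b hb0 hbsymm o ho1 hosymm c M hM C hC hfb lam hlam
      p hpgt1 hCple hK (u s)
    rw [hD] at hb
    exact hb
  -- continuity of N on [0,∞)
  have hNcont : ContinuousOn N (Set.Ici (0:ℝ)) := by
    apply continuousOn_finset_sum
    intro x _
    have habs : ContinuousOn (fun t' => ‖u t' x‖) (Set.Ici (0:ℝ)) :=
      continuous_norm.comp_continuousOn (hucont x)
    exact continuousOn_const.mul (habs.rpow_const fun s _ => Or.inr hp0.le)
  -- Gronwall via monotonicity
  set G : ℝ → ℝ := fun s => Real.exp (p * D * s) * N s with hGdef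
  have hGcont : ContinuousOn G (Set.Ici (0:ℝ)) :=
    ((Real.continuous_exp.comp (continuous_const.mul continuous_id)).continuousOn).mul hNcont
  have hGderiv : ∀ s ∈ interior (Set.Ici (0:ℝ)), ∃ W, HasDerivAt G W s ∧ W ≤ 0 := by
    intro s hs
    rw [interior_Ici] at hs
    obtain ⟨V, hV, hVle⟩ := hNderiv s hs
    have h0 : HasDerivAt (fun s' : ℝ => p * D * s') (p * D) s := by
      simpa using (hasDerivAt_id s).const_mul (p * D)
    have h1 : HasDerivAt (fun s' => Real.exp (p * D * s')) (Real.exp (p * D * s) * (p * D)) s :=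
      (Real.hasDerivAt_exp (p * D * s)).comp s h0
    refine ⟨_, h1.mul hV, ?_⟩
    have hexp : (0:ℝ) < Real.exp (p * D * s) := Real.exp_pos _
    have hmul := mul_le_mul_of_nonneg_left hVle hexp.le
    nlinarith [hmul]
  have hGdiff : DifferentiableOn ℝ G (interior (Set.Ici (0:ℝ))) := by
    intro s hs
    obtain ⟨W, hW, _⟩ := hGderiv s hs
    exact hW.differentiableAt.differentiableWithinAt
  have hGd_le : ∀ s ∈ interior (Set.Ici (0:ℝ)), deriv G s ≤ 0 := by
    intro s hs
    obtain ⟨W, hW, hWle⟩ := hGderiv s hs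
    rw [hW.deriv]
    exact hWle
  have hanti : AntitoneOn G (Set.Ici (0:ℝ)) :=
    antitoneOn_of_deriv_nonpos (convex_Ici 0) hGcont hGdiff hGd_le
  have hGt : G t ≤ G 0 := hanti Set.self_mem_Ici ht ht
  have hNt : N t ≤ Real.exp (-(p * D * t)) * N 0 := by
    have hexp : (0:ℝ) < Real.exp (p * D * t) := Real.exp_pos _
    have h := hGt
    rw [hGdef] at h
    simp only at h
    rw [mul_zero, Real.exp_zero, one_mul] at h
    rw [Real.exp_neg, inv_mul_eq_div, le_div_iff₀ hexp]
    linarith [h]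
  have hfinal := Real.rpow_le_rpow (hN0 t) hNt (by positivity : (0:ℝ) ≤ 1/p)
  rw [Real.mul_rpow (Real.exp_nonneg _) (hN0 0)] at hfinal
  have hexp_eq : Real.exp (-(p * D * t)) ^ ((1:ℝ)/p) = Real.exp (-D * t) := by
    rw [← Real.exp_mul]
    congr 1
    field_simp
  rw [hexp_eq] at hfinal
  exact hfinal
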